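/- If λ and μ are partitions of length m with |λ| = |μ|, then K^{B_m}_{λ,μ}(q) = K^{C_m}_{λ,μ}(q) = K^{D_m}_{λ,μ}(q) = K^{A_m}_{λ,μ}(q): the Kostka–Foulkes polynomials of types B_m, C_m and D_m coincide with the Kostka–Foulkes polynomial of type A_m. -/

import Mathlib

open scoped BigOperators

noncomputable section

/-- Integral weights of rank `m`, identified with `ℤ^m`. -/
abbrev Wt (m : ℕ) := Fin m → ℤ

/-- Rational weights of rank `m` (needed for the half-integral `ρ` of type `B`). -/
abbrev QWt (m : ℕ) := Fin m → ℚ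

/-- Coercion of an integral weight to a rational weight. -/
def castWt {m : ℕ} (β : Wt m) : QWt m := fun i => (β i : ℚ)

/-- The standard basis vector `ε_i` of `ℤ^m`. -/
def eps {m : ℕ} (i : Fin m) : Wt m := fun j => if j = i then 1 else 0

/-- `ρ_m = (m, m-1, ..., 1)`. -/
def rhoZ (m : ℕ) : Wt m := fun i => (m : ℤ) - (i : ℕ)

/-- `κ_m = (1, ..., 1)`. -/
def kappa (m : ℕ) : Wt m := fun _ => 1

/-- A partition of length `m`: a weakly decreasing element of `ℕ^m` (written in `ℤ^m`). -/
def IsPart {m : ℕ} (lam : Wt m) : Prop := Antitone lam ∧ ∀ i, 0 ≤ lam i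

/-- `|λ| = λ_1 + ⋯ + λ_m`. -/
def wtSum {m : ℕ} (lam : Wt m) : ℤ := ∑ i, lam i

/-- The conjugate partition, regarded as a partition of length `n`:
`λ'_j = #{i : λ_i ≥ j}` (with `j` one-based). -/
def conj {m : ℕ} (n : ℕ) (lam : Wt m) : Wt n :=
  fun j => ((Finset.univ.filter (fun i : Fin m => ((j : ℕ) : ℤ) < lam i)).card : ℤ)

/-- The permutation action of `S_m` on `ℤ^m`. -/
def pact {m : ℕ} (σ : Equiv.Perm (Fin m)) (β : Wt m) : Wt m := β ∘ σ.symm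

/-- The permutation action of `S_m` on `ℚ^m`. -/
def qpact {m : ℕ} (σ : Equiv.Perm (Fin m)) (β : QWt m) : QWt m := β ∘ σ.symm

/-- The dot action `σ ∘ α = σ(α + ρ_m) - ρ_m`. -/
def dotAct {m : ℕ} (σ : Equiv.Perm (Fin m)) (α : Wt m) : Wt m :=
  pact σ (α + rhoZ m) - rhoZ m

/-- The three root-system types considered in the paper. -/
inductive RT | B | C | D
deriving DecidableEq

/-- The action of a signed permutation `(σ, ε)` on `ℚ^m`: the hyperoctahedral group
`W_{B_m} = W_{C_m}` consists of all such pairs. -/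
def sact {m : ℕ} (σ : Equiv.Perm (Fin m)) (ε : Fin m → Bool) (β : QWt m) : QWt m :=
  fun i => (if ε i then -1 else 1) * β (σ.symm i)

/-- `(-1)^{l(w)}` for a signed permutation `w = (σ, ε)`: the sign character of the
hyperoctahedral group, which takes value `-1` on each Coxeter generator. -/
def ssign {m : ℕ} (σ : Equiv.Perm (Fin m)) (ε : Fin m → Bool) : ℤ :=
  (Equiv.Perm.sign σ : ℤ) * ∏ i, (if ε i then -1 else 1)

/-- Which signed permutations belong to the Weyl group of type `g`: for `B` and `C` all of
them, for `D` only those changing an even number of signs. -/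
def allowed (g : RT) {m : ℕ} (ε : Fin m → Bool) : Prop :=
  g = RT.D → (∏ i, (if ε i then (-1 : ℤ) else 1)) = 1

instance (g : RT) {m : ℕ} : DecidablePred (allowed g (m := m)) := by
  unfold allowed; infer_instance

/-- The Laurent polynomial ring `ℤ[x_1^{±1/2}, ..., x_m^{±1/2}]` (allowing all rational
exponents), realized as the group algebra of `ℚ^m`. -/
abbrev LQ (m : ℕ) := AddMonoidAlgebra ℤ (QWt m)

/-- The monomial `x^β`. -/
def XQ {m : ℕ} (β : QWt m) : LQ m := AddMonoidAlgebra.single β 1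

instance {m : ℕ} : IsDomain (LQ m) := NoZeroDivisors.to_isDomain _

/-- The fraction field of the Laurent polynomial ring, in which Schur functions live. -/
abbrev KK (m : ℕ) := FractionRing (LQ m)

def toK {m : ℕ} (p : LQ m) : KK m := algebraMap (LQ m) (KK m) p

/-- The half-sum of positive roots: `ρ_B = ρ_m - (1/2,…,1/2)`, `ρ_C = ρ_m`,
`ρ_D = ρ_m - (1,…,1)`. -/
def rhoG (g : RT) (m : ℕ) : QWt m :=
  match g with
  | RT.B => fun i => ((m : ℚ) - (i : ℕ)) - 1/2
  | RT.C => fun i => (m : ℚ) - (i : ℕ)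
  | RT.D => fun i => ((m : ℚ) - (i : ℕ)) - 1

/-- `a_β = Σ_{w ∈ W_g} (-1)^{l(w)} x^{w(β)}`. -/
def aalt (g : RT) {m : ℕ} (β : QWt m) : LQ m :=
  ∑ σ : Equiv.Perm (Fin m), ∑ ε ∈ Finset.univ.filter (allowed g),
    ssign σ ε • XQ (sact σ ε β)

/-- The Schur function `s_ν^g = a_{ν+ρ_g} / a_{ρ_g}`. -/
def SchurF (g : RT) {m : ℕ} (ν : QWt m) : KK m :=
  toK (aalt g (ν + rhoG g m)) / toK (aalt g (rhoG g m))

/-- The one-row weight `(k, 0, …, 0)`. -/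
def rowWt (m : ℕ) (k : ℤ) : QWt m := fun i => if (i : ℕ) = 0 then (k : ℚ) else 0

/-- The one-column weight `(1^p, 0^{m-p})`. -/
def colWt (m : ℕ) (p : ℤ) : QWt m := fun i => if ((i : ℕ) : ℤ) < p then 1 else 0

/-- `h_k^g = s_{(k,0,…,0)}^g` for `k ≥ 0`, and `0` for `k < 0`. -/
def hF (g : RT) (m : ℕ) (k : ℤ) : KK m := if 0 ≤ k then SchurF g (rowWt m k) else 0

/-- `H_k^g = h_k^g + h_{k-2}^g + ⋯ + h_{k mod 2}^g` for `k ≥ 0`, and `0` for `k < 0`. -/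
def HF (g : RT) (m : ℕ) (k : ℤ) : KK m :=
  if 0 ≤ k then ∑ j ∈ Finset.range (k.toNat / 2 + 1), hF g m (k - 2 * j) else 0

/-- `e_p^g = s^g_{(1^p,0^{m-p})}` for `0 ≤ p ≤ m`, `e_p^g = e^g_{2m-p}` for `m < p ≤ 2m`,
and `0` otherwise. -/
def eF (g : RT) (m : ℕ) (p : ℤ) : KK m :=
  if 0 ≤ p ∧ p ≤ (m : ℤ) then SchurF g (colWt m p)
  else if (m : ℤ) < p ∧ p ≤ 2 * m then SchurF g (colWt m (2 * m - p))
  else 0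

/-- `E_k^g = e_k^g + e_{k-2}^g + ⋯ + e_{k mod 2}^g` for `k ≥ 0`, and `0` for `k < 0`. -/
def EF (g : RT) (m : ℕ) (k : ℤ) : KK m :=
  if 0 ≤ k then ∑ j ∈ Finset.range (k.toNat / 2 + 1), eF g m (k - 2 * j) else 0

/-- The `m × m` determinant `u_α^g` (in the one-row characters `h^g`). -/
def uDet (g : RT) {m : ℕ} (α : Wt m) : KK m :=
  Matrix.det (Matrix.of fun i j : Fin m =>
    if (j : ℕ) = 0 then hF g m (α i - (i : ℕ))
    else hF g m (α i - (i : ℕ) + (j : ℕ)) + hF g m (α i - (i : ℕ) - (j : ℕ)))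

/-- The `n × n` determinant `v_β^g` (in the one-column characters `e^g` of rank `m`). -/
def vDet (g : RT) (m : ℕ) {n : ℕ} (β : Wt n) : KK m :=
  Matrix.det (Matrix.of fun i j : Fin n =>
    if (j : ℕ) = 0 then eF g m (β i - (i : ℕ))
    else eF g m (β i - (i : ℕ) + (j : ℕ)) + eF g m (β i - (i : ℕ) - (j : ℕ)))

/-- `h_α^g = h^g_{α_1} ⋯ h^g_{α_m}` (and similarly for arbitrary index length). -/
def hProd (g : RT) (m : ℕ) {n : ℕ} (α : Wt n) : KK m := ∏ i, hF g m (α i)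

def HProd (g : RT) (m : ℕ) {n : ℕ} (α : Wt n) : KK m := ∏ i, HF g m (α i)

def eProd (g : RT) (m : ℕ) {n : ℕ} (α : Wt n) : KK m := ∏ i, eF g m (α i)

def EProd (g : RT) (m : ℕ) {n : ℕ} (α : Wt n) : KK m := ∏ i, EF g m (α i)

/-- The Laurent polynomial ring `ℤ[x_1^{±1}, ..., x_m^{±1}]`, realized as the group
algebra of `ℤ^m`. -/
abbrev LZ (m : ℕ) := AddMonoidAlgebra ℤ (Wt m)

/-- The monomial `x^β`. -/
def XZ {m : ℕ} (β : Wt m) : LZ m := AddMonoidAlgebra.single β 1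

/-- `φ_m = ∏_{1≤i<j≤m} (1 - x_i/x_j) · ∏_{1≤r<s≤m} (1 - 1/(x_r x_s))`; its coefficients
are the function `a` (resp. `f_{q=1}` up to expansion conventions). -/
def phiSmall (m : ℕ) : LZ m :=
  (∏ p ∈ Finset.univ.filter (fun p : Fin m × Fin m => p.1 < p.2),
      (1 - XZ (eps p.1 - eps p.2))) *
  (∏ p ∈ Finset.univ.filter (fun p : Fin m × Fin m => p.1 < p.2),
      (1 - XZ (-(eps p.1 + eps p.2))))

/-- `Φ_m = ∏_{1≤i<j≤m} (1 - x_i/x_j) · ∏_{1≤r≤s≤m} (1 - 1/(x_r x_s))`. -/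
def phiBig (m : ℕ) : LZ m :=
  (∏ p ∈ Finset.univ.filter (fun p : Fin m × Fin m => p.1 < p.2),
      (1 - XZ (eps p.1 - eps p.2))) *
  (∏ p ∈ Finset.univ.filter (fun p : Fin m × Fin m => p.1 ≤ p.2),
      (1 - XZ (-(eps p.1 + eps p.2))))

/-- The coefficient `a(γ)` of `x^γ` in `φ_m`. -/
def coeffSmall (m : ℕ) (γ : Wt m) : ℤ := (phiSmall m).coeff γ

/-- The coefficient `A(γ)` of `x^γ` in `Φ_m`. -/
def coeffBig (m : ℕ) (γ : Wt m) : ℤ := (phiBig m).coeff γ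

/-- The generic `q`-partition function attached to a finite family `v` of vectors:
the coefficient of `q^d` counts the families `(n_i)` of nonnegative integers with
`Σ n_i = d` and `Σ n_i v_i = β`.  This encodes the coefficient of `x^β` in the formal
series expansion of `∏_i (1 - q x^{v_i})^{-1}` as a power series in `q`. -/
def PqPS {m : ℕ} {ι : Type} [Fintype ι] (v : ι → Wt m) (β : QWt m) : PowerSeries ℤ :=
  PowerSeries.mk fun d =>
    (Nat.card {n : ι → ℕ // (∑ i, n i) = d ∧ castWt (∑ i, (n i : ℤ) • v i) = β} : ℤ)

/-- The specialization at `q = 1` of `PqPS`: the number of ways to write `β` as a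
nonnegative integral combination of the vectors `v_i`. -/
def POne {m : ℕ} {ι : Type} [Fintype ι] (v : ι → Wt m) (β : Wt m) : ℤ :=
  (Nat.card {n : ι → ℕ // (∑ i, (n i : ℤ) • v i) = β} : ℤ)

/-- Index type for the pairs `1 ≤ i < j ≤ m`. -/
abbrev IdxLT (m : ℕ) := {p : Fin m × Fin m // p.1 < p.2}

/-- Index type for the pairs `1 ≤ i ≤ j ≤ m`. -/
abbrev IdxLE (m : ℕ) := {p : Fin m × Fin m // p.1 ≤ p.2}

/-- The positive roots `ε_i - ε_j` (`i < j`) of type `A_m`. -/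
def rootsA (m : ℕ) : IdxLT m → Wt m := fun p => eps p.1.1 - eps p.1.2

/-- The positive roots of type `B_m`. -/
def rootsB (m : ℕ) : IdxLT m ⊕ IdxLT m ⊕ Fin m → Wt m
  | .inl p => eps p.1.1 - eps p.1.2
  | .inr (.inl p) => eps p.1.1 + eps p.1.2
  | .inr (.inr i) => eps i

/-- The positive roots of type `C_m` (note `2ε_i = ε_i + ε_i`). -/
def rootsC (m : ℕ) : IdxLT m ⊕ IdxLE m → Wt m
  | .inl p => eps p.1.1 - eps p.1.2
  | .inr p => eps p.1.1 + eps p.1.2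

/-- The positive roots of type `D_m`. -/
def rootsD (m : ℕ) : IdxLT m ⊕ IdxLT m → Wt m
  | .inl p => eps p.1.1 - eps p.1.2
  | .inr p => eps p.1.1 + eps p.1.2

/-- The vectors `ε_i - ε_j` (`i < j`) and `-(ε_r + ε_s)` (`r < s`), whose `q`-partition
function is `f_q`. -/
def vfSmall (m : ℕ) : IdxLT m ⊕ IdxLT m → Wt m
  | .inl p => eps p.1.1 - eps p.1.2
  | .inr p => -(eps p.1.1 + eps p.1.2)

/-- The vectors `ε_i - ε_j` (`i < j`) and `-(ε_r + ε_s)` (`r ≤ s`), whose `q`-partition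
function is `F_q`. -/
def vfBig (m : ℕ) : IdxLT m ⊕ IdxLE m → Wt m
  | .inl p => eps p.1.1 - eps p.1.2
  | .inr p => -(eps p.1.1 + eps p.1.2)

/-- `f_q`. -/
def fq {m : ℕ} (β : Wt m) : PowerSeries ℤ := PqPS (vfSmall m) (castWt β)

/-- `F_q`. -/
def Fq {m : ℕ} (β : Wt m) : PowerSeries ℤ := PqPS (vfBig m) (castWt β)

/-- The `q`-analogue of Kostant's partition function, type `A_m`. -/
def PqA {m : ℕ} (β : QWt m) : PowerSeries ℤ := PqPS (rootsA m) β

/-- The `q`-analogue of Kostant's partition function, types `B_m`, `C_m`, `D_m`. -/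
def PqG (g : RT) {m : ℕ} (β : QWt m) : PowerSeries ℤ :=
  match g with
  | RT.B => PqPS (rootsB m) β
  | RT.C => PqPS (rootsC m) β
  | RT.D => PqPS (rootsD m) β

/-- The Kostka–Foulkes polynomial
`K^g_{λ,μ}(q) = Σ_{w ∈ W_g} (-1)^{l(w)} P_q^g(w(λ+ρ_g) - (μ+ρ_g))`. -/
def KF (g : RT) {m : ℕ} (lam mu : QWt m) : PowerSeries ℤ :=
  ∑ σ : Equiv.Perm (Fin m), ∑ ε ∈ Finset.univ.filter (allowed g),
    ssign σ ε • PqG g (sact σ ε (lam + rhoG g m) - (mu + rhoG g m))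

/-- The Kostka–Foulkes polynomial of type `A_m`,
`K^{A_m}_{λ,γ}(q) = Σ_{σ ∈ S_m} (-1)^{l(σ)} P_q^{A_m}(σ(λ+ρ_m) - (γ+ρ_m))`,
defined for arbitrary `γ ∈ ℤ^m`. -/
def KFA {m : ℕ} (lam gamma : Wt m) : PowerSeries ℤ :=
  ∑ σ : Equiv.Perm (Fin m),
    (Equiv.Perm.sign σ : ℤ) • PqA (castWt (pact σ (lam + rhoZ m) - (gamma + rhoZ m)))

/-- `u_{λ,μ}(q) = Σ_{σ ∈ S_m} (-1)^{l(σ)} f_q(σ(λ+ρ_m) - μ - ρ_m)`. -/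
def uP {m : ℕ} (lam mu : Wt m) : PowerSeries ℤ :=
  ∑ σ : Equiv.Perm (Fin m),
    (Equiv.Perm.sign σ : ℤ) • fq (pact σ (lam + rhoZ m) - mu - rhoZ m)

/-- `U_{λ,μ}(q) = Σ_{σ ∈ S_m} (-1)^{l(σ)} F_q(σ(λ+ρ_m) - μ - ρ_m)`. -/
def UP {m : ℕ} (lam mu : Wt m) : PowerSeries ℤ :=
  ∑ σ : Equiv.Perm (Fin m),
    (Equiv.Perm.sign σ : ℤ) • Fq (pact σ (lam + rhoZ m) - mu - rhoZ m)

/-- `f_q` specialized at `q = 1`. -/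
def fOne {m : ℕ} (β : Wt m) : ℤ := POne (vfSmall m) β

/-- `F_q` specialized at `q = 1`. -/
def FOne {m : ℕ} (β : Wt m) : ℤ := POne (vfBig m) β

/-- `u_{λ,μ}(1)`. -/
def uP1 {m : ℕ} (lam mu : Wt m) : ℤ :=
  ∑ σ : Equiv.Perm (Fin m),
    (Equiv.Perm.sign σ : ℤ) * fOne (pact σ (lam + rhoZ m) - mu - rhoZ m)

/-- `U_{λ,μ}(1)`. -/
def UP1 {m : ℕ} (lam mu : Wt m) : ℤ :=
  ∑ σ : Equiv.Perm (Fin m),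
    (Equiv.Perm.sign σ : ℤ) * FOne (pact σ (lam + rhoZ m) - mu - rhoZ m)

/-- `λ̂ = (n - λ_m, …, n - λ_1)`. -/
def hatP {m : ℕ} (n : ℤ) (lam : Wt m) : Wt m := fun i => n - lam i.rev

/-- The involution `I(α_1, …, α_m) = (-α_m, …, -α_1)`. -/
def invI {m : ℕ} (α : Wt m) : Wt m := fun i => -α i.rev

/-- `σ*`, defined by `σ*(k) = σ(m - k + 1)`. -/
def starPerm {m : ℕ} (σ : Equiv.Perm (Fin m)) : Equiv.Perm (Fin m) :=
  (Fin.revPerm).trans σ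

/-- The number of ways to write `β = Σ_{1≤r≤s≤m} e_{r,s} (ε_r + ε_s)`, `e_{r,s} ∈ ℕ`. -/
def cC (m : ℕ) (β : Wt m) : ℕ :=
  Nat.card {e : IdxLE m → ℕ // (∑ p, (e p : ℤ) • (eps p.1.1 + eps p.1.2)) = β}

/-- The number of ways to write `β = Σ_{1≤r<s≤m} e_{r,s} (ε_r + ε_s)`, `e_{r,s} ∈ ℕ`. -/
def cD (m : ℕ) (β : Wt m) : ℕ :=
  Nat.card {e : IdxLT m → ℕ // (∑ p, (e p : ℤ) • (eps p.1.1 + eps p.1.2)) = β}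

/-- The set `C_k^m`. -/
def setC (m k : ℕ) : Set (Wt m) :=
  {β | (∃ e : IdxLE m → ℕ, (∑ p, (e p : ℤ) • (eps p.1.1 + eps p.1.2)) = β) ∧
       wtSum β = 2 * k}

/-- The set `D_k^m`. -/
def setD (m k : ℕ) : Set (Wt m) :=
  {β | (∃ e : IdxLT m → ℕ, (∑ p, (e p : ℤ) • (eps p.1.1 + eps p.1.2)) = β) ∧
       wtSum β = 2 * k}

/-!
Sum the coordinates. Every root of type `A` has coordinate sum `0`, every other positive root
of type `B`, `C` or `D` has positive coordinate sum, so `P_q^g(β)` vanishes when `β` has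
negative coordinate sum and equals `P_q^{A}(β)` when it has coordinate sum `0`. For
`w = (σ, ε)` and `γ = λ + ρ_g`, `δ = μ + ρ_g` with `|λ| = |μ|`, the coordinate sum of
`w γ - δ` is `-2 Σ γ_j` over the coordinates `j` whose sign `w` changes. Every `γ_j` is
positive, except that in type `D` the last one may vanish; but an element of `W_{D_m}` changing
some sign changes at least two. Hence only the sign-free `w ∈ S_m` contribute, and for those
`w γ - δ = σ(λ + ρ_m) - (μ + ρ_m)` since `ρ_g - ρ_m` is constant.
-/

section

variable {m : ℕ}

lemma sum_castWt (w : Wt m) : ∑ i, castWt w i = ((∑ i, w i : ℤ) : ℚ) := by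
  simp [castWt]

lemma sum_apply_sum_smul {ι : Type} [Fintype ι] (v : ι → Wt m) (n : ι → ℕ) :
    ∑ x, (∑ i, (n i : ℤ) • v i) x = ∑ i, (n i : ℤ) * ∑ x, v i x := by
  simp only [Finset.sum_apply, Pi.smul_apply, smul_eq_mul, Finset.mul_sum]
  exact Finset.sum_comm

lemma PqPS_eq_zero_of_sum_neg {ι : Type} [Fintype ι] {v : ι → Wt m}
    (hv : ∀ i, 0 ≤ ∑ x, v i x) {β : QWt m} (hβ : ∑ x, β x < 0) : PqPS v β = 0 := by
  ext d
  suffices IsEmpty {n : ι → ℕ // (∑ i, n i) = d ∧ castWt (∑ i, (n i : ℤ) • v i) = β} by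
    simp [PqPS]
  refine ⟨fun ⟨n, _, hn⟩ => hβ.not_ge ?_⟩
  rw [← hn, sum_castWt, sum_apply_sum_smul]
  exact_mod_cast Finset.sum_nonneg fun i _ => mul_nonneg (Int.natCast_nonneg _) (hv i)

lemma eq_zero_of_castWt_sum_smul_eq {ι κ : Type} [Fintype ι] [Fintype κ] {v : ι ⊕ κ → Wt m}
    (hinl : ∀ i, ∑ x, v (.inl i) x = 0) (hinr : ∀ j, 0 < ∑ x, v (.inr j) x)
    {β : QWt m} (hβ : ∑ x, β x = 0) {n : ι ⊕ κ → ℕ}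
    (hn : castWt (∑ i, (n i : ℤ) • v i) = β) (j : κ) : n (.inr j) = 0 := by
  have hsum : ∑ i, (n (.inr i) : ℤ) * ∑ x, v (.inr i) x = 0 := by
    have := congrArg (fun β : QWt m => ∑ x, β x) hn
    simp only [sum_castWt, sum_apply_sum_smul, hβ] at this
    simp only [Fintype.sum_sum_type, hinl, mul_zero, Finset.sum_const_zero, zero_add] at this
    exact_mod_cast this
  have hj := (Finset.sum_eq_zero_iff_of_nonneg fun i _ =>
    mul_nonneg (Int.natCast_nonneg _) (hinr i).le).mp hsum j (Finset.mem_univ j)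
  simpa [(hinr j).ne'] using hj

lemma PqPS_eq_PqPS_inl_of_sum_eq_zero {ι κ : Type} [Fintype ι] [Fintype κ] (v : ι ⊕ κ → Wt m)
    (hinl : ∀ i, ∑ x, v (.inl i) x = 0) (hinr : ∀ j, 0 < ∑ x, v (.inr j) x)
    {β : QWt m} (hβ : ∑ x, β x = 0) :
    PqPS v β = PqPS (fun i => v (.inl i)) β := by
  have hinr0 := fun n hn => eq_zero_of_castWt_sum_smul_eq hinl hinr hβ (n := n) hn
  ext d
  simp only [PqPS, PowerSeries.coeff_mk]
  congr 1
  refine Nat.card_congr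
    { toFun := fun n => ⟨fun i => n.1 (.inl i), ?_⟩
      invFun := fun n => ⟨Sum.elim n.1 0, ?_⟩
      left_inv := fun n => Subtype.ext <| funext fun
        | .inl _ => rfl
        | .inr j => (hinr0 n.1 n.2.2 j).symm
      right_inv := fun _ => rfl }
  · simpa [Fintype.sum_sum_type, hinr0 n.1 n.2.2] using n.2
  · simpa [Fintype.sum_sum_type] using n.2

lemma sum_eps (i : Fin m) : ∑ x, eps i x = 1 := by
  simp [eps]

lemma sum_eps_sub_eps (i j : Fin m) : ∑ x, (eps i - eps j) x = 0 := by
  simp [Finset.sum_sub_distrib, sum_eps]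

lemma sum_eps_add_eps (i j : Fin m) : ∑ x, (eps i + eps j) x = 2 := by
  simp [Finset.sum_add_distrib, sum_eps]

lemma PqG_eq_zero_of_sum_neg (g : RT) {β : QWt m} (hβ : ∑ x, β x < 0) : PqG g β = 0 := by
  cases g <;> refine PqPS_eq_zero_of_sum_neg ?_ hβ
  · rintro (p | p | i) <;>
      simp only [rootsB, sum_eps_sub_eps, sum_eps_add_eps, sum_eps] <;> norm_num
  · rintro (p | p) <;> simp only [rootsC, sum_eps_sub_eps, sum_eps_add_eps] <;> norm_num
  · rintro (p | p) <;> simp only [rootsD, sum_eps_sub_eps, sum_eps_add_eps] <;> norm_num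

lemma PqG_eq_PqA_of_sum_eq_zero (g : RT) {β : QWt m} (hβ : ∑ x, β x = 0) :
    PqG g β = PqA β := by
  cases g
  · refine PqPS_eq_PqPS_inl_of_sum_eq_zero (rootsB m) (fun p => sum_eps_sub_eps _ _) ?_ hβ
    rintro (p | i) <;> simp only [rootsB, sum_eps_add_eps, sum_eps] <;> norm_num
  · exact PqPS_eq_PqPS_inl_of_sum_eq_zero (rootsC m) (fun p => sum_eps_sub_eps _ _)
      (fun p => by simp only [rootsC, sum_eps_add_eps]; norm_num) hβ
  · exact PqPS_eq_PqPS_inl_of_sum_eq_zero (rootsD m) (fun p => sum_eps_sub_eps _ _)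
      (fun p => by simp only [rootsD, sum_eps_add_eps]; norm_num) hβ

lemma sum_sact (σ : Equiv.Perm (Fin m)) (ε : Fin m → Bool) (β : QWt m) :
    ∑ i, sact σ ε β i = ∑ j, (if ε (σ j) then -1 else 1) * β j := by
  rw [← Equiv.sum_comp σ]
  simp [sact]

lemma sum_sact_lt_sum {σ : Equiv.Perm (Fin m)} {ε : Fin m → Bool} {β : QWt m}
    (hβ : ∀ j, 0 ≤ β j) {j : Fin m} (hj : ε (σ j) = true) (hβj : 0 < β j) :
    ∑ i, sact σ ε β i < ∑ j, β j := by
  rw [sum_sact]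
  refine Finset.sum_lt_sum (fun k _ => ?_) ⟨j, Finset.mem_univ _, ?_⟩
  · split <;> linarith [hβ k]
  · rw [if_pos hj]
    linarith

lemma exists_ne_of_prod_sign_eq_one {ι : Type*} [Fintype ι] {η : ι → Bool}
    (h : ∏ i, (if η i then (-1 : ℤ) else 1) = 1) {a : ι} (ha : η a = true) :
    ∃ b ≠ a, η b = true := by
  by_contra! hb
  rw [Fintype.prod_eq_single a fun b hba => by simp [hb b hba], if_pos ha] at h
  norm_num at h

lemma rhoG_nonneg (g : RT) (j : Fin m) : 0 ≤ rhoG g m j := by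
  have hj : ((j : ℕ) : ℚ) + 1 ≤ m := by exact_mod_cast j.isLt
  cases g <;> simp only [rhoG] <;> linarith

lemma rhoG_pos {g : RT} {j : Fin m} (hj : g ≠ RT.D ∨ (j : ℕ) + 1 < m) : 0 < rhoG g m j := by
  have hjm : ((j : ℕ) : ℚ) + 1 ≤ m := by exact_mod_cast j.isLt
  cases g with
  | B => simp only [rhoG]; linarith
  | C => simp only [rhoG]; linarith
  | D =>
    have hj' : ((j : ℕ) : ℚ) + 1 < m := by exact_mod_cast hj.resolve_left (absurd rfl)
    simp only [rhoG]
    linarith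

lemma exists_sign_change_rhoG_pos {g : RT} (σ : Equiv.Perm (Fin m)) {ε : Fin m → Bool}
    (hε : allowed g ε) {i : Fin m} (hi : ε i = true) :
    ∃ j, ε (σ j) = true ∧ 0 < rhoG g m j := by
  by_cases hg : g = RT.D
  · have hprod : ∏ j, (if ε (σ j) then (-1 : ℤ) else 1) = 1 := by
      rw [Equiv.prod_comp σ (fun i => if ε i then (-1 : ℤ) else 1)]
      exact hε hg
    obtain ⟨b, hba, hb⟩ := exists_ne_of_prod_sign_eq_one hprod (a := σ.symm i) (by simpa)
    by_cases ha : ((σ.symm i : Fin m) : ℕ) + 1 < m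
    · exact ⟨σ.symm i, by simpa, rhoG_pos (Or.inr ha)⟩
    · refine ⟨b, hb, rhoG_pos (Or.inr ?_)⟩
      have := Fin.val_ne_of_ne hba
      omega
  · exact ⟨σ.symm i, by simpa, rhoG_pos (Or.inl hg)⟩

lemma sum_castWt_add_rhoG_eq {lam mu : Wt m} (h : wtSum lam = wtSum mu) (g : RT) :
    ∑ i, (castWt lam + rhoG g m) i = ∑ i, (castWt mu + rhoG g m) i := by
  simp only [Pi.add_apply, Finset.sum_add_distrib, sum_castWt]
  rw [← wtSum, ← wtSum, h]

lemma PqG_sact_sub_eq_zero {g : RT} {lam mu : Wt m} (hlam : ∀ i, 0 ≤ lam i)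
    (h : wtSum lam = wtSum mu) (σ : Equiv.Perm (Fin m)) {ε : Fin m → Bool}
    (hε : allowed g ε) {i : Fin m} (hi : ε i = true) :
    PqG g (sact σ ε (castWt lam + rhoG g m) - (castWt mu + rhoG g m)) = 0 := by
  obtain ⟨j, hj, hρj⟩ := exists_sign_change_rhoG_pos σ hε hi
  have hγ (k : Fin m) : 0 ≤ (castWt lam + rhoG g m) k :=
    add_nonneg (Int.cast_nonneg (hlam k)) (rhoG_nonneg g k)
  have hγj : 0 < (castWt lam + rhoG g m) j :=
    add_pos_of_nonneg_of_pos (Int.cast_nonneg (hlam j)) hρj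
  apply PqG_eq_zero_of_sum_neg
  simp only [Pi.sub_apply, Finset.sum_sub_distrib, sub_neg]
  exact (sum_sact_lt_sum hγ hj hγj).trans_eq (sum_castWt_add_rhoG_eq h g)

lemma sact_castWt_add_rhoG_sub (g : RT) (σ : Equiv.Perm (Fin m)) (lam mu : Wt m) :
    sact σ (fun _ => false) (castWt lam + rhoG g m) - (castWt mu + rhoG g m) =
      castWt (pact σ (lam + rhoZ m) - (mu + rhoZ m)) := by
  funext i
  cases g <;> simp [sact, castWt, pact, rhoG, rhoZ] <;> ring

theorem KF_eq_KFA (g : RT) {lam mu : Wt m} (hlam : ∀ i, 0 ≤ lam i)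
    (h : wtSum lam = wtSum mu) : KF g (castWt lam) (castWt mu) = KFA lam mu := by
  refine Finset.sum_congr rfl fun σ _ => ?_
  rw [Finset.sum_eq_single_of_mem (fun _ => false) (by simp [allowed]) fun ε hε hne => ?_]
  · have hsum : ∑ i, castWt (pact σ (lam + rhoZ m) - (mu + rhoZ m)) i = 0 := by
      rw [← sact_castWt_add_rhoG_sub g]
      simp only [Pi.sub_apply, Finset.sum_sub_distrib, sum_sact, Bool.false_eq_true, if_false,
        one_mul]
      exact sub_eq_zero.mpr (sum_castWt_add_rhoG_eq h g)
    rw [sact_castWt_add_rhoG_sub, PqG_eq_PqA_of_sum_eq_zero g hsum]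
    simp [ssign]
  · obtain ⟨i, hi⟩ := Function.ne_iff.mp hne
    rw [PqG_sact_sub_eq_zero hlam h σ (Finset.mem_filter.mp hε).2 (by simpa using hi), smul_zero]

end

theorem stmt10_general (m : ℕ) (lam mu : Wt m) (hlam : IsPart lam)
    (h : wtSum lam = wtSum mu) :
    KF RT.B (castWt lam) (castWt mu) = KFA lam mu ∧
    KF RT.C (castWt lam) (castWt mu) = KFA lam mu ∧
    KF RT.D (castWt lam) (castWt mu) = KFA lam mu :=
  ⟨KF_eq_KFA RT.B hlam.2 h, KF_eq_KFA RT.C hlam.2 h, KF_eq_KFA RT.D hlam.2 h⟩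

/-- If `|λ| = |μ|`, the Kostka–Foulkes polynomials of types
`B_m, C_m, D_m` all coincide with the Kostka–Foulkes polynomial of type `A_m`. -/
theorem stmt10 (m : ℕ) (hm : 1 ≤ m) (lam mu : Wt m) (hlam : IsPart lam) (hmu : IsPart mu)
    (h : wtSum lam = wtSum mu) :
    KF RT.B (castWt lam) (castWt mu) = KFA lam mu ∧
    KF RT.C (castWt lam) (castWt mu) = KFA lam mu ∧
    KF RT.D (castWt lam) (castWt mu) = KFA lam mu :=
  stmt10_general m lam mu hlam h

end
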